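/- The language L' = { u^n 0^m h : n ≥ 2^m − 1 } fails the pumping property for context-free languages: for every p ≥ 1 there is a string s ∈ L' with |s| ≥ p such that for every decomposition s = r v w x y with |vwx| ≤ p and |vx| ≥ 1, there exists n ≥ 0 with r v^n w x^n y ∉ L'. -/

import Mathlib

/-!
Letter counts decide membership in `Lcc'`: a member has exactly one `h` and
`2 ^ #0 ≤ #u + 1`. Pump `s = u^(2^p - 1) 0^p h` with `|vx| ≤ p`. If `vx` contains the `h`,
pumping down removes it; if `vx` consists of `u`s only, pumping down keeps `#0 = p` but makes
`#u < 2^p - 1`. Otherwise pumping up once adds `k ≥ 1` zeros, multiplying `2 ^ #0` by `2^k ≥ 2`,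
but fewer than `p < 2^p` letters `u`.
-/

inductive Alph : Type
  | u | z | h
deriving DecidableEq

/-- The regular language { u^n 0^m h : n, m ≥ 0 } (with `Alph.z` playing the role of `0`). -/
def Lu0h : Language Alph :=
  {w | ∃ n m : ℕ, w = List.replicate n Alph.u ++ List.replicate m Alph.z ++ [Alph.h]}

/-- The language L' = { u^n 0^m h : n ≥ 2^m − 1 }. -/
def Lcc' : Language Alph :=
  {w | ∃ n m : ℕ, w = List.replicate n Alph.u ++ List.replicate m Alph.z ++ [Alph.h] ∧ 2 ^ m - 1 ≤ n}

/-- n-fold repetition of a word. -/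
def listPow {α : Type*} (l : List α) (n : ℕ) : List α := (List.replicate n l).flatten

theorem Alph.count_u_add_count_z_add_count_h (l : List Alph) :
    l.count Alph.u + l.count Alph.z + l.count Alph.h = l.length := by
  induction l with
  | nil => rfl
  | cons a t ih => cases a <;> simp <;> omega

theorem count_listPow {α : Type*} [BEq α] (a : α) (l : List α) (n : ℕ) :
    (listPow l n).count a = n * l.count a := by
  simp [listPow, List.count_flatten]

theorem count_pump {α : Type*} [BEq α] (a : α) (r v w x y : List α) (n : ℕ) :
    (r ++ listPow v n ++ w ++ listPow x n ++ y).count a =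
      (r ++ w ++ y).count a + n * (v ++ x).count a := by
  simp only [List.count_append, count_listPow]
  ring

theorem count_of_mem_Lcc' {s : List Alph} (hs : s ∈ Lcc') :
    s.count Alph.h = 1 ∧ 2 ^ s.count Alph.z ≤ s.count Alph.u + 1 := by
  obtain ⟨n, m, rfl, hnm⟩ := hs
  simp [List.count_replicate]
  omega

theorem two_pow_add_lt_two_pow_add {p c d : ℕ} (hc : c ≤ p) (hd : 0 < d) :
    2 ^ p + c < 2 ^ (p + d) :=
  calc 2 ^ p + c < 2 ^ p + 2 ^ p := by have := p.lt_two_pow_self; omega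
    _ = 2 ^ (p + 1) := by ring
    _ ≤ 2 ^ (p + d) := Nat.pow_le_pow_right two_pos (by omega)

def pumpWitness (p : ℕ) : List Alph :=
  List.replicate (2 ^ p - 1) Alph.u ++ List.replicate p Alph.z ++ [Alph.h]

theorem pumpWitness_mem_Lcc' (p : ℕ) : pumpWitness p ∈ Lcc' :=
  ⟨2 ^ p - 1, p, rfl, le_rfl⟩

theorem le_length_pumpWitness (p : ℕ) : p ≤ (pumpWitness p).length := by
  simp only [pumpWitness, List.length_append, List.length_replicate, List.length_singleton]
  omega

theorem count_u_pumpWitness (p : ℕ) : (pumpWitness p).count Alph.u = 2 ^ p - 1 := by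
  simp [pumpWitness, List.count_replicate]

theorem count_z_pumpWitness (p : ℕ) : (pumpWitness p).count Alph.z = p := by
  simp [pumpWitness, List.count_replicate]

theorem count_h_pumpWitness (p : ℕ) : (pumpWitness p).count Alph.h = 1 := by
  simp [pumpWitness, List.count_replicate]

theorem exists_pump_not_mem_Lcc' {p : ℕ} {r v w x y : List Alph}
    (hs : pumpWitness p = r ++ v ++ w ++ x ++ y) (hlen : (v ++ x).length ≤ p)
    (hpos : 1 ≤ (v ++ x).length) :
    ∃ n : ℕ, r ++ listPow v n ++ w ++ listPow x n ++ y ∉ Lcc' := by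
  have hcount (a : Alph) :
      (pumpWitness p).count a = (r ++ w ++ y).count a + (v ++ x).count a := by
    rw [hs]; simp only [List.count_append]; ring
  have hu := hcount Alph.u
  have hz := hcount Alph.z
  have hh := hcount Alph.h
  simp only [count_u_pumpWitness, count_z_pumpWitness, count_h_pumpWitness] at hu hz hh
  have hsum := Alph.count_u_add_count_z_add_count_h (v ++ x)
  by_cases hH : (v ++ x).count Alph.h = 0
  · by_cases hZ : (v ++ x).count Alph.z = 0
    · refine ⟨0, fun hmem => ?_⟩
      have hbound := (count_of_mem_Lcc' hmem).2
      rw [count_pump, count_pump, zero_mul, zero_mul, add_zero, add_zero,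
        show (r ++ w ++ y).count Alph.z = p by omega] at hbound
      omega
    · refine ⟨2, fun hmem => ?_⟩
      have hbound := (count_of_mem_Lcc' hmem).2
      rw [count_pump, count_pump,
        show (r ++ w ++ y).count Alph.z + 2 * (v ++ x).count Alph.z =
          p + (v ++ x).count Alph.z by omega] at hbound
      have := two_pow_add_lt_two_pow_add (p := p) (c := (v ++ x).count Alph.u)
        (d := (v ++ x).count Alph.z) (by omega) (by omega)
      have := p.one_le_two_pow
      omega
  · refine ⟨0, fun hmem => ?_⟩
    have hone := (count_of_mem_Lcc' hmem).1
    rw [count_pump, zero_mul, add_zero] at hone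
    omega

/-- L' fails the pumping property for context-free languages. -/
theorem Lcc'_fails_pumping :
    ∀ p : ℕ, 1 ≤ p → ∃ s ∈ Lcc', p ≤ s.length ∧
      ∀ r v w x y : List Alph, s = r ++ v ++ w ++ x ++ y →
        (v ++ w ++ x).length ≤ p → 1 ≤ (v ++ x).length →
        ∃ n : ℕ, r ++ listPow v n ++ w ++ listPow x n ++ y ∉ Lcc' := by
  intro p _
  refine ⟨pumpWitness p, pumpWitness_mem_Lcc' p, le_length_pumpWitness p, ?_⟩
  intro r v w x y hs hvwx hvx
  refine exists_pump_not_mem_Lcc' hs ?_ hvx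
  simp only [List.length_append] at hvwx ⊢
  omega
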